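/- arXiv:hep-th/0603011 — 2 statements merged into one kernel-verified Lean document; each statement's English description precedes it below -/
import Mathlib

section
/- Let g be a finite-dimensional real solvable Lie algebra of dimension n ≥ 1 with structure constants τ^I_{JK} in some basis, and define the Ricci matrix Ric^I_J = -(1/4)Tr(τ_I τ_J) - (1/4)Tr(τ_I τ_J^T) + (1/8)Σ_K (τ_K τ_K^T)^{IJ} - (1/4)Σ_K τ^I_{KJ} Tr(τ_K) + (1/4)Σ_K τ^K_{IJ} Tr(τ_K) - (1/4)Σ_K τ^J_{KI} Tr(τ_K), where (τ_I)^A_B = τ^A_{IB}. Then Ric is not positive definite. -/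
/-!
Since `g` is solvable, `[g, g] ≠ g`, so some nonzero linear form `c` vanishes on all brackets:
`Σ_A c_A τ^A_{IB} = 0`. Evaluating the Ricci form at `c`, every term in which `c` is contracted
against an upper index of `τ` vanishes, and so does the one contracting `c ⊗ c` with the
antisymmetric lower indices. With `M = Σ_I c_I τ_I` what is left is
`-(1/4) (Tr (M M) + Tr (M Mᵀ)) = -(1/8) Tr ((M + Mᵀ)(M + Mᵀ)ᵀ) ≤ 0`.
-/

open Matrix

open scoped BigOperators

/-- The "Ricci matrix" built from structure constants `τ^A_{IB} = τ A I B`: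
`Ric^I_J = -(1/4)Tr(τ_I τ_J) - (1/4)Tr(τ_I τ_Jᵀ) + (1/8)Σ_K (τ_K τ_Kᵀ)^{IJ}
 - (1/4)Σ_K τ^I_{KJ} Tr(τ_K) + (1/4)Σ_K τ^K_{IJ} Tr(τ_K) - (1/4)Σ_K τ^J_{KI} Tr(τ_K)`,
where `(τ_I)^A_B = τ^A_{IB}`. -/
noncomputable def RicciMatrix {n : ℕ} (τ : Fin n → Fin n → Fin n → ℝ) :
    Matrix (Fin n) (Fin n) ℝ :=
  let t : Fin n → Matrix (Fin n) (Fin n) ℝ := fun I => Matrix.of fun A B => τ A I B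
  Matrix.of fun I J =>
    -(1/4) * (t I * t J).trace - (1/4) * (t I * (t J)ᵀ).trace
      + (1/8) * ∑ K, (t K * (t K)ᵀ) I J
      - (1/4) * ∑ K, τ I K J * (t K).trace
      + (1/4) * ∑ K, τ K I J * (t K).trace
      - (1/4) * ∑ K, τ J K I * (t K).trace

namespace Matrix

variable {ι m n R : Type*} [Fintype ι] [Fintype m] [Fintype n] [CommRing R]

theorem dotProduct_mulVec_trace_mul (t : ι → Matrix m n R) (s : ι → Matrix n m R) (c : ι → R) :
    c ⬝ᵥ (of fun I J => (t I * s J).trace) *ᵥ c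
      = ((∑ I, c I • t I) * ∑ J, c J • s J).trace := by
  simp only [dotProduct, mulVec, of_apply, Matrix.sum_mul, Matrix.mul_sum, trace_sum,
    Matrix.smul_mul, Matrix.mul_smul, trace_smul, smul_eq_mul, Finset.mul_sum]
  rw [Finset.sum_comm]
  exact Finset.sum_congr rfl fun I _ => Finset.sum_congr rfl fun J _ => by ring

theorem dotProduct_mulVec_eq_zero_of_vecMul_eq_zero {A : Matrix n n R} {c : n → R}
    (h : c ᵥ* A = 0) : c ⬝ᵥ A *ᵥ c = 0 := by
  rw [dotProduct_mulVec, h, zero_dotProduct]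

theorem dotProduct_mulVec_self_eq_zero_of_transpose_eq_neg [IsAddTorsionFree R]
    {A : Matrix n n R} (hA : Aᵀ = -A) (c : n → R) : c ⬝ᵥ A *ᵥ c = 0 := by
  refine self_eq_neg.mp ?_
  conv_lhs => rw [dotProduct_mulVec, ← mulVec_transpose, hA, dotProduct_comm]
  rw [neg_mulVec, dotProduct_neg]

theorem trace_mul_self_add_trace_mul_transpose_nonneg (M : Matrix n n ℝ) :
    0 ≤ (M * M).trace + (M * Mᵀ).trace := by
  have h := (posSemidef_self_mul_conjTranspose (M + Mᵀ)).trace_nonneg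
  rw [conjTranspose_eq_transpose_of_trivial] at h
  have : ((M + Mᵀ) * (M + Mᵀ)ᵀ).trace = 2 * ((M * M).trace + (M * Mᵀ).trace) := by
    simp only [transpose_add, transpose_transpose, add_mul, mul_add, trace_add]
    rw [← trace_transpose (Mᵀ * Mᵀ), trace_mul_comm Mᵀ M]
    simp only [transpose_mul, transpose_transpose]
    ring
  linarith

end Matrix

/-- The matrix `τ_I` of `RicciMatrix`, i.e. of `ad (b I)` in the basis `b`. -/
def adMatrix {ι R : Type*} (τ : ι → ι → ι → R) (I : ι) : Matrix ι ι R :=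
  of fun A B => τ A I B

theorem ricciMatrix_eq {n : ℕ} (τ : Fin n → Fin n → Fin n → ℝ) :
    RicciMatrix τ =
      -(1/4 : ℝ) • of (fun I J => (adMatrix τ I * adMatrix τ J).trace)
      - (1/4 : ℝ) • of (fun I J => (adMatrix τ I * (adMatrix τ J)ᵀ).trace)
      + (1/8 : ℝ) • ∑ K, adMatrix τ K * (adMatrix τ K)ᵀ
      - (1/4 : ℝ) • ∑ K, (adMatrix τ K).trace • adMatrix τ K
      + (1/4 : ℝ) • ∑ K, (adMatrix τ K).trace • of (fun I J => τ K I J)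
      - (1/4 : ℝ) • ∑ K, (adMatrix τ K).trace • (adMatrix τ K)ᵀ := by
  ext I J
  simp [RicciMatrix, adMatrix, Matrix.sum_apply, mul_comm]

theorem dotProduct_ricciMatrix_mulVec_nonpos {n : ℕ} (τ : Fin n → Fin n → Fin n → ℝ)
    (hskew : ∀ K I J, τ K J I = -τ K I J) (c : Fin n → ℝ) (hc : ∀ I, c ᵥ* adMatrix τ I = 0) :
    c ⬝ᵥ RicciMatrix τ *ᵥ c ≤ 0 := by
  set M := ∑ I, c I • adMatrix τ I
  have hMM : c ⬝ᵥ (of fun I J => (adMatrix τ I * adMatrix τ J).trace) *ᵥ c = (M * M).trace :=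
    dotProduct_mulVec_trace_mul _ _ c
  have hMMt : c ⬝ᵥ (of fun I J => (adMatrix τ I * (adMatrix τ J)ᵀ).trace) *ᵥ c
      = (M * Mᵀ).trace := by
    rw [dotProduct_mulVec_trace_mul, transpose_sum]
    simp only [transpose_smul, M]
  have hadad : ∀ K, c ⬝ᵥ (adMatrix τ K * (adMatrix τ K)ᵀ) *ᵥ c = 0 := fun K =>
    dotProduct_mulVec_eq_zero_of_vecMul_eq_zero (by rw [← vecMul_vecMul, hc, zero_vecMul])
  have had : ∀ K, c ⬝ᵥ adMatrix τ K *ᵥ c = 0 := fun K =>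
    dotProduct_mulVec_eq_zero_of_vecMul_eq_zero (hc K)
  have hadt : ∀ K, c ⬝ᵥ (adMatrix τ K)ᵀ *ᵥ c = 0 := fun K => by
    rw [mulVec_transpose, dotProduct_comm, hc, zero_dotProduct]
  have hbracket : ∀ K, c ⬝ᵥ (of fun I J => τ K I J) *ᵥ c = 0 := fun K =>
    dotProduct_mulVec_self_eq_zero_of_transpose_eq_neg (by ext I J; exact hskew K I J) c
  have hquad : c ⬝ᵥ RicciMatrix τ *ᵥ c = -(1/4) * ((M * M).trace + (M * Mᵀ).trace) := by
    rw [ricciMatrix_eq]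
    simp only [sub_mulVec, add_mulVec, smul_mulVec, sum_mulVec, dotProduct_sub,
      dotProduct_add, dotProduct_smul, dotProduct_sum, hMM, hMMt, hadad, had, hadt, hbracket,
      smul_eq_mul, mul_zero, Finset.sum_const_zero]
    ring
  rw [hquad]
  linarith [trace_mul_self_add_trace_mul_transpose_nonneg M]

theorem LieAlgebra.exists_dual_ne_zero_forall_lie_eq_zero {K L : Type*} [Field K] [LieRing L]
    [LieAlgebra K L] [IsSolvable L] [Nontrivial L] :
    ∃ f : Module.Dual K L, f ≠ 0 ∧ ∀ x y : L, f ⁅x, y⁆ = 0 := by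
  have hlt : (derivedSeries K L 1).toSubmodule < ⊤ := by
    rw [lt_top_iff_ne_top, Ne, LieSubmodule.toSubmodule_eq_top]
    exact (derivedSeries_lt_top_of_solvable K L).ne
  obtain ⟨f, hf, hle⟩ := Submodule.exists_le_ker_of_lt_top _ hlt
  exact ⟨f, hf, fun x y =>
    hle (LieSubmodule.lie_mem_lie (LieSubmodule.mem_top x) (LieSubmodule.mem_top y))⟩

section StructureConstants

variable {ι R L : Type*} [Fintype ι] [CommRing R] [LieRing L] [Module R L]
  (b : Module.Basis ι R L) (τ : ι → ι → ι → R)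

theorem structureConstants_antisymm (hτ : ∀ I J, ⁅b I, b J⁆ = ∑ K, τ K I J • b K) (K I J : ι) :
    τ K J I = -τ K I J := by
  have hrepr : ∀ I J, b.repr ⁅b I, b J⁆ K = τ K I J := fun I J => by rw [hτ, b.repr_sum_self]
  rw [← hrepr, ← hrepr, ← lie_skew, map_neg, Finsupp.neg_apply]

theorem vecMul_adMatrix_eq_zero (hτ : ∀ I J, ⁅b I, b J⁆ = ∑ K, τ K I J • b K)
    (f : Module.Dual R L) (hf : ∀ x y : L, f ⁅x, y⁆ = 0) (I : ι) :
    (fun K => f (b K)) ᵥ* adMatrix τ I = 0 := by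
  ext B
  rw [Pi.zero_apply, ← hf (b I) (b B), hτ, map_sum]
  simp [vecMul, dotProduct, adMatrix, mul_comm]

end StructureConstants

/-- For a real solvable Lie algebra of dimension `n ≥ 1` with structure constants
`τ^K_{IJ}` in some basis (`⁅b I, b J⁆ = Σ_K τ^K_{IJ} b K`), the Ricci matrix is not
positive definite. -/
theorem ricci_not_posDef_of_solvable
    (n : ℕ) (hn : 1 ≤ n)
    (L : Type) [LieRing L] [LieAlgebra ℝ L] [LieAlgebra.IsSolvable L]
    (b : Module.Basis (Fin n) ℝ L)
    (τ : Fin n → Fin n → Fin n → ℝ)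
    (hτ : ∀ I J : Fin n, ⁅b I, b J⁆ = ∑ K, τ K I J • b K) :
    ¬ (RicciMatrix τ).PosDef := by
  have : Nontrivial L := nontrivial_of_ne (b ⟨0, hn⟩) 0 (b.ne_zero _)
  obtain ⟨f, hf, hfL⟩ := LieAlgebra.exists_dual_ne_zero_forall_lie_eq_zero (K := ℝ) (L := L)
  have hc : (fun K => f (b K)) ≠ 0 := fun h => hf (b.ext fun K => congrFun h K)
  intro hPD
  exact (hPD.dotProduct_mulVec_pos hc).not_ge <| dotProduct_ricciMatrix_mulVec_nonpos τ
    (structureConstants_antisymm b τ hτ) _ (vecMul_adMatrix_eq_zero b τ hτ f hfL)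
end

section
/- Consider the 7-dimensional real Lie algebra with basis J_1,J_2,J_3,W_1,W_2,W_3,Z and brackets [J_x,J_y]=ε_{xyz}J_z, [J_x,W_y]=ε_{xyz}W_z, [J_x,Z]=0, [W_x,W_y]=0, [Z,W_x]=γ W_x (for a real parameter γ). Its Ricci matrix, computed from the structure constants by Ric^I_J = -(1/4)Tr(τ_I τ_J) - (1/4)Tr(τ_I τ_J^T) + (1/8)Σ_K(τ_K τ_K^T)^{IJ} - (1/4)Σ_K τ^I_{KJ}Tr(τ_K) + (1/4)Σ_K τ^K_{IJ}Tr(τ_K) - (1/4)Σ_K τ^J_{KI}Tr(τ_K), equals diag(1/4, 1/4, 1/4, -3γ²/2, -3γ²/2, -3γ²/2, -3γ²/2). In particular, it is never positive definite. -/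
open Matrix

open scoped BigOperators

/-- The Jacobi identity for structure constants `τ^K_{IJ} = τ K I J`. -/
def JacobiId {n : ℕ} (τ : Fin n → Fin n → Fin n → ℝ) : Prop :=
  ∀ I J K M : Fin n,
    ∑ L, (τ M L K * τ L I J + τ M L I * τ L J K + τ M L J * τ L K I) = 0

/-- The Levi-Civita symbol on three indices `0,1,2` (as naturals), `ε_{012} = 1`. -/
noncomputable def epsN (x y z : ℕ) : ℝ :=
  (((x : ℝ) - y) * ((y : ℝ) - z) * ((z : ℝ) - x)) / 2

/-- Structure constants `τ^A_{IB}` of the algebra `so3w3+1` in the ordered basis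
`(J₁,J₂,J₃,W₁,W₂,W₃,Z)`: `[J_x,J_y]=ε_{xyz}J_z`, `[J_x,W_y]=ε_{xyz}W_z`,
`[J_x,Z]=0`, `[W_x,W_y]=0`, `[Z,W_x]=γ W_x`. -/
noncomputable def tauSO3W31 (g : ℝ) : Fin 7 → Fin 7 → Fin 7 → ℝ := fun A I B =>
  if A.1 < 3 ∧ I.1 < 3 ∧ B.1 < 3 then epsN I.1 B.1 A.1
  else if I.1 < 3 ∧ 3 ≤ B.1 ∧ B.1 < 6 ∧ 3 ≤ A.1 ∧ A.1 < 6 then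
    epsN I.1 (B.1 - 3) (A.1 - 3)
  else if 3 ≤ I.1 ∧ I.1 < 6 ∧ B.1 < 3 ∧ 3 ≤ A.1 ∧ A.1 < 6 then
    -epsN B.1 (I.1 - 3) (A.1 - 3)
  else if I.1 = 6 ∧ 3 ≤ B.1 ∧ B.1 < 6 ∧ A = B then g
  else if 3 ≤ I.1 ∧ I.1 < 6 ∧ B.1 = 6 ∧ A = I then -g
  else 0

/-! The structure constants are affine in `γ`, `τ(γ) = τ₀ + γ τ₁` with integer `τ₀, τ₁`, while the
Jacobiator and the Ricci matrix are quadratic in `τ`. Expanding them in `γ` leaves finitely many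
identities between integer tensors, which the kernel checks by evaluation. -/

section StructureConstants

variable {R : Type*} [CommRing R] {n : ℕ}

def jacobiator (σ ρ : Fin n → Fin n → Fin n → R) (I J K M : Fin n) : R :=
  ∑ L, (σ M L K * ρ L I J + σ M L I * ρ L J K + σ M L J * ρ L K I)

def ricciForm (σ ρ : Fin n → Fin n → Fin n → R) (I J : Fin n) : R :=
  ∑ A, ∑ B, (-2 * σ A I B * ρ B J A - 2 * σ A I B * ρ A J B + σ I A B * ρ J A B
    - 2 * σ I A J * ρ B A B + 2 * σ A I J * ρ B A B - 2 * σ J A I * ρ B A B)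

lemma jacobiator_add_smul (a b : Fin n → Fin n → Fin n → R) (g : R) (I J K M : Fin n) :
    jacobiator (a + g • b) (a + g • b) I J K M = jacobiator a a I J K M
      + g * (jacobiator a b I J K M + jacobiator b a I J K M)
      + g ^ 2 * jacobiator b b I J K M := by
  simp only [jacobiator, Pi.add_apply, Pi.smul_apply, smul_eq_mul, Finset.mul_sum,
    ← Finset.sum_add_distrib]
  exact Finset.sum_congr rfl fun _ _ => by ring

lemma ricciForm_add_smul (a b : Fin n → Fin n → Fin n → R) (g : R) (I J : Fin n) :
    ricciForm (a + g • b) (a + g • b) I J = ricciForm a a I J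
      + g * (ricciForm a b I J + ricciForm b a I J) + g ^ 2 * ricciForm b b I J := by
  simp only [ricciForm, Pi.add_apply, Pi.smul_apply, smul_eq_mul, Finset.mul_sum,
    ← Finset.sum_add_distrib]
  exact Finset.sum_congr rfl fun _ _ => Finset.sum_congr rfl fun _ _ => by ring

lemma jacobiator_intCast (σ ρ : Fin n → Fin n → Fin n → ℤ) (I J K M : Fin n) :
    jacobiator (fun A B C => (σ A B C : R)) (fun A B C => (ρ A B C : R)) I J K M =
      jacobiator σ ρ I J K M := by
  simp [jacobiator]

lemma ricciForm_intCast (σ ρ : Fin n → Fin n → Fin n → ℤ) (I J : Fin n) :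
    ricciForm (fun A B C => (σ A B C : R)) (fun A B C => (ρ A B C : R)) I J =
      ricciForm σ ρ I J := by
  simp [ricciForm]

end StructureConstants

lemma ricciMatrix_apply {n : ℕ} (τ : Fin n → Fin n → Fin n → ℝ) (I J : Fin n) :
    RicciMatrix τ I J = ricciForm τ τ I J / 8 := by
  simp only [RicciMatrix, ricciForm, Matrix.trace, Matrix.diag, Matrix.mul_apply,
    Matrix.transpose_apply, Matrix.of_apply, Finset.mul_sum, Finset.sum_div,
    ← Finset.sum_add_distrib, ← Finset.sum_sub_distrib]
  exact Finset.sum_congr rfl fun _ _ => Finset.sum_congr rfl fun _ _ => by ring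

def epsZ (x y z : ℕ) : ℤ := (((x : ℤ) - y) * ((y : ℤ) - z) * ((z : ℤ) - x)) / 2

lemma two_dvd_sub_mul_sub_mul_sub (a b c : ℤ) : 2 ∣ (a - b) * (b - c) * (c - a) := by
  simp only [← even_iff_two_dvd, Int.even_mul, Int.even_sub]
  tauto

lemma epsN_eq_epsZ (x y z : ℕ) : epsN x y z = epsZ x y z := by
  rw [epsN, epsZ, Int.cast_div (two_dvd_sub_mul_sub_mul_sub _ _ _) (by norm_num)]
  push_cast
  rfl

/-- The `γ`-independent part of `tauSO3W31`: the structure constants of `so(3) ⋉ ℝ³ ⊕ ℝ Z`. -/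
def tauSO3W3 : Fin 7 → Fin 7 → Fin 7 → ℤ := fun A I B =>
  if A.1 < 3 ∧ I.1 < 3 ∧ B.1 < 3 then epsZ I.1 B.1 A.1
  else if I.1 < 3 ∧ 3 ≤ B.1 ∧ B.1 < 6 ∧ 3 ≤ A.1 ∧ A.1 < 6 then
    epsZ I.1 (B.1 - 3) (A.1 - 3)
  else if 3 ≤ I.1 ∧ I.1 < 6 ∧ B.1 < 3 ∧ 3 ≤ A.1 ∧ A.1 < 6 then
    -epsZ B.1 (I.1 - 3) (A.1 - 3)
  else 0

/-- The coefficient of `γ` in `tauSO3W31`: `Z` acts on the `W_x` by the identity. -/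
def tauDilation : Fin 7 → Fin 7 → Fin 7 → ℤ := fun A I B =>
  if I.1 = 6 ∧ 3 ≤ B.1 ∧ B.1 < 6 ∧ A = B then 1
  else if 3 ≤ I.1 ∧ I.1 < 6 ∧ B.1 = 6 ∧ A = I then -1
  else 0

lemma tauSO3W31_eq (g : ℝ) :
    tauSO3W31 g = (fun A I B => (tauSO3W3 A I B : ℝ)) + g • fun A I B => (tauDilation A I B : ℝ) := by
  ext A I B
  simp only [tauSO3W31, tauSO3W3, tauDilation, Pi.add_apply, Pi.smul_apply, smul_eq_mul]
  split_ifs <;> simp_all [epsN_eq_epsZ]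

lemma jacobiator_tauSO3W3 (I J K M : Fin 7) : jacobiator tauSO3W3 tauSO3W3 I J K M = 0 := by
  revert I J K M; decide

lemma jacobiator_tauSO3W3_tauDilation (I J K M : Fin 7) :
    jacobiator tauSO3W3 tauDilation I J K M + jacobiator tauDilation tauSO3W3 I J K M = 0 := by
  revert I J K M; decide

lemma jacobiator_tauDilation (I J K M : Fin 7) : jacobiator tauDilation tauDilation I J K M = 0 := by
  revert I J K M; decide

lemma ricciForm_tauSO3W3 (I J : Fin 7) :
    ricciForm tauSO3W3 tauSO3W3 I J = if I = J ∧ I.1 < 3 then 2 else 0 := by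
  revert I J; decide

lemma ricciForm_tauSO3W3_tauDilation (I J : Fin 7) :
    ricciForm tauSO3W3 tauDilation I J + ricciForm tauDilation tauSO3W3 I J = 0 := by
  revert I J; decide

lemma ricciForm_tauDilation (I J : Fin 7) :
    ricciForm tauDilation tauDilation I J = if I = J ∧ 3 ≤ I.1 then -12 else 0 := by
  revert I J; decide

theorem jacobiId_tauSO3W31 (g : ℝ) : JacobiId (tauSO3W31 g) := fun I J K M => by
  change jacobiator _ _ I J K M = 0
  rw [tauSO3W31_eq, jacobiator_add_smul]
  simp only [jacobiator_intCast, jacobiator_tauSO3W3, jacobiator_tauDilation]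
  rw [← Int.cast_add, jacobiator_tauSO3W3_tauDilation]
  simp

theorem ricciMatrix_tauSO3W31 (g : ℝ) :
    RicciMatrix (tauSO3W31 g) =
      Matrix.diagonal ![1/4, 1/4, 1/4, -3*g^2/2, -3*g^2/2, -3*g^2/2, -3*g^2/2] := by
  ext I J
  rw [ricciMatrix_apply, tauSO3W31_eq, ricciForm_add_smul]
  simp only [ricciForm_intCast, ricciForm_tauSO3W3, ricciForm_tauDilation]
  rw [← Int.cast_add, ricciForm_tauSO3W3_tauDilation, Matrix.diagonal_apply]
  rcases eq_or_ne I J with rfl | hIJ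
  · fin_cases I <;> norm_num <;> ring
  · simp [hIJ]

/-- The algebra `so3w3+1` is a Lie algebra and its Ricci matrix is
`diag(1/4, 1/4, 1/4, -3γ²/2, -3γ²/2, -3γ²/2, -3γ²/2)`; in particular it is never
positive definite. -/
theorem ricci_so3w31 (g : ℝ) :
    JacobiId (tauSO3W31 g) ∧
    RicciMatrix (tauSO3W31 g) =
      Matrix.diagonal
        ![1/4, 1/4, 1/4, -3*g^2/2, -3*g^2/2, -3*g^2/2, -3*g^2/2] ∧
    ¬ (RicciMatrix (tauSO3W31 g)).PosDef := by
  refine ⟨jacobiId_tauSO3W31 g, ricciMatrix_tauSO3W31 g, fun hpos => ?_⟩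
  rw [ricciMatrix_tauSO3W31, Matrix.posDef_diagonal_iff] at hpos
  have hZ : (0 : ℝ) < -3 * g ^ 2 / 2 := hpos 6
  nlinarith [sq_nonneg g]
end
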